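/- arXiv:2503.23059 — 3 statements merged into one kernel-verified Lean document; each statement's English description precedes it below -/
import Mathlib

section
/- Let f : F_q^k → F_q^l be a surjective linear map, k ≥ b ≥ 1, t ≥ 1, and B the matrix with entries B_{u,v} = max(2t − b + 2 − d_b(u,v), 0) when f(u) ≠ f(v) and 0 otherwise. Then Σ_{u,v ∈ F_q^k} B_{u,v} ≥ q^k · ((2t − b + 2)(q^k − q^{k−l}) − k(q^k − q^{k−b}) + s), where s = Σ_{u ∈ ker f} w_b(u). -/
/-!
With `M = 2t - b + 2`, dropping the positive part bounds each row of `B` below by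
`∑_{f v ≠ f u} (M - d_b(u, v))`. As `d_b(u, v) = w_b(u - v)`, this is the sum over all `v` minus
the sum over the coset `u + ker f`, namely
`M (q^k - q^{k-l}) - ∑_w w_b(w) + ∑_{z ∈ ker f} w_b(z)`.
Finally `∑_w w_b(w) = k (q^k - q^{k-b})`: for `b ≤ k` a cyclic window consists of `b` distinct
coordinates, so it vanishes on exactly `q^{k-b}` vectors.
-/

open Finset

/-- The b-symbol read vector of `u`: the length-`k` vector of cyclic windows of length `b`. -/
def piB (F : Type*) (k b : ℕ) (u : Fin k → F) : Fin k → (Fin b → F) :=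
  fun i j => u ⟨(i.val + j.val) % k, Nat.mod_lt _ i.pos⟩

/-- The b-symbol distance between `u` and `v`. -/
def dB (F : Type*) [DecidableEq F] (k b : ℕ) (u v : Fin k → F) : ℕ :=
  hammingDist (piB F k b u) (piB F k b v)

/-- The b-symbol weight of `u`: the number of nonzero cyclic windows of length `b`. -/
def wB (F : Type*) [DecidableEq F] [Zero F] (k b : ℕ) (u : Fin k → F) : ℕ :=
  (Finset.univ.filter (fun i : Fin k => piB F k b u i ≠ 0)).card

/-- The matrix `B_f^{(1)}(t)` with entries `[2t - b + 2 - d_b(u,v)]^+` when `f u ≠ f v`, else 0. -/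
def Bmat (F : Type*) [DecidableEq F] {α : Type*} [DecidableEq α] (k b t : ℕ)
    (f : (Fin k → F) → α) (u v : Fin k → F) : ℤ :=
  if f u ≠ f v then max (2 * (t : ℤ) - b + 2 - dB F k b u v) 0 else 0

lemma piB_sub {F : Type*} [Sub F] {k b : ℕ} (u v : Fin k → F) :
    piB F k b (u - v) = piB F k b u - piB F k b v := rfl

lemma dB_eq_wB_sub {F : Type*} [AddCommGroup F] [DecidableEq F] {k b : ℕ} (u v : Fin k → F) :
    dB F k b u v = wB F k b (u - v) := by
  rw [dB, hammingDist_comm, hammingDist_eq_hammingNorm, neg_add_eq_sub, ← piB_sub]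
  rfl

lemma window_injective {k b : ℕ} (hbk : b ≤ k) (i : Fin k) :
    Function.Injective fun j : Fin b =>
      (⟨(i.val + j.val) % k, Nat.mod_lt _ i.pos⟩ : Fin k) := by
  intro j₁ j₂ h
  have h' : j₁.val % k = j₂.val % k := Nat.ModEq.add_left_cancel' i.val (Fin.mk.inj h)
  rwa [Nat.mod_eq_of_lt (j₁.2.trans_le hbk), Nat.mod_eq_of_lt (j₂.2.trans_le hbk),
    ← Fin.ext_iff] at h'

lemma card_filter_forall_mem_eq_zero {ι F : Type*} [Fintype ι] [DecidableEq ι]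
    [Fintype F] [DecidableEq F] [Zero F] (S : Finset ι) :
    #{w : ι → F | ∀ i ∈ S, w i = 0} = Fintype.card F ^ (Fintype.card ι - #S) := by
  have hfilter : ({w : ι → F | ∀ i ∈ S, w i = 0} : Finset _) =
      Fintype.piFinset fun i => if i ∈ S then {0} else univ := by
    ext w
    simp only [mem_filter, mem_univ, true_and, Fintype.mem_piFinset]
    refine forall_congr' fun i => ?_
    split_ifs <;> simp [*]
  rw [hfilter, Fintype.card_piFinset, ← card_compl, ← prod_const, ← Fintype.prod_ite_mem Sᶜ]
  refine Fintype.prod_congr _ _ fun i => ?_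
  split_ifs <;> simp_all

lemma card_filter_piB_eq_zero {F : Type*} [Fintype F] [DecidableEq F] [Zero F] {k b : ℕ}
    (hbk : b ≤ k) (i : Fin k) :
    #{w : Fin k → F | piB F k b w i = 0} = Fintype.card F ^ (k - b) := by
  have h := card_filter_forall_mem_eq_zero (F := F) (univ.map ⟨_, window_injective hbk i⟩)
  rw [card_map, card_univ, Fintype.card_fin, Fintype.card_fin] at h
  rw [← h]
  congr 1
  ext w
  simp [piB, funext_iff]

lemma sum_wB {F : Type*} [Fintype F] [DecidableEq F] [Zero F] {k b : ℕ} (hbk : b ≤ k) :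
    ∑ w : Fin k → F, (wB F k b w : ℤ) =
      k * ((Fintype.card F : ℤ) ^ k - Fintype.card F ^ (k - b)) := by
  have hwindow (i : Fin k) : (#{w : Fin k → F | piB F k b w i ≠ 0} : ℤ) =
      Fintype.card F ^ k - Fintype.card F ^ (k - b) := by
    have h := card_filter_add_card_filter_not (s := univ) fun w : Fin k → F => piB F k b w i = 0
    rw [card_filter_piB_eq_zero hbk i, card_univ, Fintype.card_fun, Fintype.card_fin] at h
    rw [eq_sub_iff_add_eq]
    exact_mod_cast (by omega : _)
  simp_rw [wB, card_eq_sum_ones, sum_filter, Nat.cast_sum]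
  rw [sum_comm]
  simp only [Nat.cast_ite, Nat.cast_one, Nat.cast_zero, sum_boole, hwindow, sum_const, card_univ,
    Fintype.card_fin, nsmul_eq_mul]

lemma card_ker_eq_pow_of_surjective {K V W : Type*} [Field K] [Fintype K] [AddCommGroup V]
    [Module K V] [Fintype V] [AddCommGroup W] [Module K W] [FiniteDimensional K W] [DecidableEq W]
    {f : V →ₗ[K] W} (hf : Function.Surjective f) :
    #{v | f v = 0} = Fintype.card K ^ (Module.finrank K V - Module.finrank K W) := by
  have hrank := LinearMap.finrank_range_add_finrank_ker f
  rw [LinearMap.range_eq_top.mpr hf, finrank_top] at hrank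
  rw [← Fintype.card_subtype, ← Nat.card_eq_fintype_card,
    Nat.card_congr (Equiv.subtypeEquivRight fun v => LinearMap.mem_ker.symm),
    Module.natCard_eq_pow_finrank (K := K), Nat.card_eq_fintype_card]
  congr 1
  omega

lemma sum_fiber_eq_sum_ker {G H Φ M : Type*} [AddGroup G] [Fintype G] [AddGroup H]
    [DecidableEq H] [FunLike Φ G H] [AddMonoidHomClass Φ G H] [AddCommMonoid M]
    (f : Φ) (g : G → M) (u : G) :
    ∑ v with f u = f v, g (u - v) = ∑ z with f z = 0, g z := by
  refine sum_equiv (Equiv.subLeft u) (fun v => ?_) fun v _ => rfl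
  simp [sub_eq_zero]

lemma sum_Bmat_row_ge {F H Φ : Type*} {k b : ℕ} [AddCommGroup F] [Fintype F] [DecidableEq F]
    [AddGroup H] [DecidableEq H] [FunLike Φ (Fin k → F) H] [AddMonoidHomClass Φ (Fin k → F) H]
    (t : ℕ) (f : Φ) (u : Fin k → F) :
    (2 * (t : ℤ) - b + 2) * (Fintype.card (Fin k → F) - #{z | f z = 0})
        - ∑ w, (wB F k b w : ℤ) + ∑ z with f z = 0, (wB F k b z : ℤ)
      ≤ ∑ v, Bmat F k b t ⇑f u v := by
  set g : (Fin k → F) → ℤ := fun z => 2 * (t : ℤ) - b + 2 - wB F k b z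
  have hentry (v : Fin k → F) :
      (if f u = f v then 0 else g (u - v)) ≤ Bmat F k b t ⇑f u v := by
    by_cases h : f u = f v
    · simp [Bmat, h]
    · simp only [Bmat, h, if_false, ne_eq, not_false_eq_true, if_true, dB_eq_wB_sub]
      exact le_max_left _ _
  have hsplit : ∑ v, (if f u = f v then 0 else g (u - v)) =
      ∑ v, g (u - v) - ∑ v with f u = f v, g (u - v) := by
    rw [sum_filter, ← sum_sub_distrib]
    exact sum_congr rfl fun v _ => by split_ifs <;> ring
  calc _ = ∑ w, g w - ∑ z with f z = 0, g z := by
        simp only [g, sum_sub_distrib, sum_const, card_univ, nsmul_eq_mul]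
        ring
    _ = ∑ v, (if f u = f v then 0 else g (u - v)) := by
        rw [hsplit, sum_fiber_eq_sum_ker,
          Fintype.sum_equiv (Equiv.subLeft u) (fun v => g (u - v)) g fun _ => rfl]
    _ ≤ _ := sum_le_sum fun v _ => hentry v

theorem Bmat_total_sum_lower_bound_general (F : Type*) [Field F] [Fintype F] [DecidableEq F]
    (q k l b t : ℕ) (hq : Fintype.card F = q) (hbk : b ≤ k)
    (f : (Fin k → F) →ₗ[F] (Fin l → F)) (hf : Function.Surjective f) :
    (∑ u : Fin k → F, ∑ v : Fin k → F, Bmat F k b t f u v) ≥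
      (q : ℤ) ^ k * ((2 * (t : ℤ) - b + 2) * ((q : ℤ) ^ k - (q : ℤ) ^ (k - l))
        - (k : ℤ) * ((q : ℤ) ^ k - (q : ℤ) ^ (k - b))
        + ∑ u ∈ Finset.univ.filter (fun u : Fin k → F => f u = 0), (wB F k b u : ℤ)) := by
  subst hq
  have hrow := sum_Bmat_row_ge (b := b) t f
  have hker : #{z | f z = 0} = Fintype.card F ^ (k - l) := by
    rw [card_ker_eq_pow_of_surjective hf, Module.finrank_fin_fun, Module.finrank_fin_fun]
  simp only [hker, sum_wB hbk, Fintype.card_fun, Fintype.card_fin] at hrow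
  calc _ = #(univ : Finset (Fin k → F)) • _ := by
        rw [card_univ, Fintype.card_fun, Fintype.card_fin, nsmul_eq_mul]
        push_cast
        rfl
    _ ≤ _ := card_nsmul_le_sum _ _ _ fun u _ => hrow u

theorem Bmat_total_sum_lower_bound (F : Type*) [Field F] [Fintype F] [DecidableEq F]
    (q k l b t : ℕ) (hq : Fintype.card F = q) (hb : 1 ≤ b) (hbk : b ≤ k) (ht : 1 ≤ t)
    (f : (Fin k → F) →ₗ[F] (Fin l → F)) (hf : Function.Surjective f) :
    (∑ u : Fin k → F, ∑ v : Fin k → F, Bmat F k b t f u v) ≥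
      (q : ℤ) ^ k * ((2 * (t : ℤ) - b + 2) * ((q : ℤ) ^ k - (q : ℤ) ^ (k - l))
        - (k : ℤ) * ((q : ℤ) ^ k - (q : ℤ) ^ (k - b))
        + ∑ u ∈ Finset.univ.filter (fun u : Fin k → F => f u = 0), (wB F k b u : ℤ)) :=
  Bmat_total_sum_lower_bound_general F q k l b t hq hbk f hf
end

section
/- For any finite list of M codewords p_0, …, p_{M−1} ∈ F_q^r with M a multiple of q^b and r ≥ b, the sum of pairwise b-symbol distances satisfies Σ_{i,j} d_b(p_i, p_j) ≤ r · M^2 · (1 − q^{−b}). -/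
open Finset

lemma key_plotkin {α : Type*} [Fintype α] [DecidableEq α] [Nonempty α] (M : ℕ)
    (g : Fin M → α) :
    (∑ i : Fin M, ∑ j : Fin M, (if g i ≠ g j then (1:ℝ) else 0))
      ≤ (M:ℝ)^2 * (1 - (Fintype.card α : ℝ)⁻¹) := by
  set n : α → ℝ := fun c => ∑ i : Fin M, (if g i = c then (1:ℝ) else 0) with hn
  have hsum : ∑ c : α, n c = M := by
    rw [Finset.sum_comm]
    simp
  have hpt : ∀ i j : Fin M, (if g i = g j then (1:ℝ) else 0)
      = ∑ c : α, (if g i = c then (1:ℝ) else 0) * (if g j = c then (1:ℝ) else 0) := by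
    intro i j
    by_cases h : g i = g j <;>
      simp [h, ite_mul, mul_ite, Finset.sum_ite_eq', eq_comm]
  have heq : (∑ i : Fin M, ∑ j : Fin M, (if g i = g j then (1:ℝ) else 0))
      = ∑ c : α, n c ^ 2 := by
    simp only [hpt]
    calc (∑ i : Fin M, ∑ j : Fin M, ∑ c : α,
            (if g i = c then (1:ℝ) else 0) * (if g j = c then (1:ℝ) else 0))
        = ∑ i : Fin M, ∑ c : α, ∑ j : Fin M,
            (if g i = c then (1:ℝ) else 0) * (if g j = c then (1:ℝ) else 0) :=
          Finset.sum_congr rfl fun i _ => Finset.sum_comm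
      _ = ∑ c : α, ∑ i : Fin M, ∑ j : Fin M,
            (if g i = c then (1:ℝ) else 0) * (if g j = c then (1:ℝ) else 0) :=
          Finset.sum_comm
      _ = ∑ c : α, n c ^ 2 := by
          refine Finset.sum_congr rfl fun c _ => ?_
          rw [← Finset.sum_mul_sum]
          simp [hn, sq]
  have hcs : ((M:ℝ))^2 ≤ (Fintype.card α : ℝ) * ∑ c : α, n c ^ 2 := by
    have := sq_sum_le_card_mul_sum_sq (s := (Finset.univ : Finset α)) (f := n)
    rw [hsum] at this
    simpa using this
  have hcard : (0:ℝ) < (Fintype.card α : ℝ) := by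
    have := Fintype.card_pos (α := α); exact_mod_cast this
  have hcomb : ∀ i j : Fin M, (if g i ≠ g j then (1:ℝ) else 0)
      = 1 - (if g i = g j then (1:ℝ) else 0) := by
    intro i j; by_cases h : g i = g j <;> simp [h]
  calc (∑ i : Fin M, ∑ j : Fin M, (if g i ≠ g j then (1:ℝ) else 0))
      = (M:ℝ)^2 - ∑ c : α, n c ^ 2 := by
        simp only [hcomb, Finset.sum_sub_distrib]
        rw [heq]; simp [sq]
    _ ≤ (M:ℝ)^2 * (1 - (Fintype.card α : ℝ)⁻¹) := by
        have h2 : (M:ℝ)^2 / (Fintype.card α : ℝ) ≤ ∑ c : α, n c ^ 2 :=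
          (div_le_iff₀ hcard).mpr (by linarith [hcs])
        have h3 : (M:ℝ)^2 * (Fintype.card α : ℝ)⁻¹ = (M:ℝ)^2 / (Fintype.card α : ℝ) := by
          ring
        nlinarith [h2]

theorem sum_pairwise_dB_upper_bound (F : Type*) [Field F] [Fintype F] [DecidableEq F]
    (q r b M : ℕ) (hq : Fintype.card F = q) (hb : 1 ≤ b) (hbr : b ≤ r)
    (hM : q ^ b ∣ M) (p : Fin M → (Fin r → F)) :
    (∑ i : Fin M, ∑ j : Fin M, (dB F r b (p i) (p j) : ℝ)) ≤
      (r : ℝ) * (M : ℝ) ^ 2 * (1 - ((q : ℝ) ^ b)⁻¹) := by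
  have hd : ∀ i j : Fin M, (dB F r b (p i) (p j) : ℝ)
      = ∑ k : Fin r, (if piB F r b (p i) k ≠ piB F r b (p j) k then (1:ℝ) else 0) := by
    intro i j
    rw [dB, hammingDist, Finset.card_filter]
    push_cast
    rfl
  simp only [hd]
  have hcard : (Fintype.card (Fin b → F) : ℝ) = (q:ℝ)^b := by
    rw [Fintype.card_fun, hq]; push_cast; simp
  have hbound : ∀ k : Fin r,
      (∑ i : Fin M, ∑ j : Fin M,
        (if piB F r b (p i) k ≠ piB F r b (p j) k then (1:ℝ) else 0))
      ≤ (M:ℝ)^2 * (1 - ((q:ℝ)^b)⁻¹) := by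
    intro k
    have := key_plotkin (α := Fin b → F) M (fun i => piB F r b (p i) k)
    rwa [hcard] at this
  calc (∑ i : Fin M, ∑ j : Fin M, ∑ k : Fin r,
        (if piB F r b (p i) k ≠ piB F r b (p j) k then (1:ℝ) else 0))
      = ∑ i : Fin M, ∑ k : Fin r, ∑ j : Fin M,
        (if piB F r b (p i) k ≠ piB F r b (p j) k then (1:ℝ) else 0) :=
        Finset.sum_congr rfl fun i _ => Finset.sum_comm
    _ = ∑ k : Fin r, ∑ i : Fin M, ∑ j : Fin M,
        (if piB F r b (p i) k ≠ piB F r b (p j) k then (1:ℝ) else 0) :=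
        Finset.sum_comm
    _ ≤ ∑ _k : Fin r, (M:ℝ)^2 * (1 - ((q:ℝ)^b)⁻¹) :=
        Finset.sum_le_sum fun k _ => hbound k
    _ = (r : ℝ) * (M : ℝ) ^ 2 * (1 - ((q : ℝ) ^ b)⁻¹) := by
        rw [Finset.sum_const]; simp; ring
end

section
/- Let f : F_q^k → F_q^l be a surjective linear map, k ≥ 1, t ≥ 1, and let P ⊆ F_q^r be a code indexed by F_q^k with Hamming distances d_H(p_i, p_j) ≥ max(2t + 1 − d_H(u_i, u_j), 0) whenever f(u_i) ≠ f(u_j). Then r ≥ (q/(q−1))(2t+1)(1 − q^{−l}) − k + s/((q−1)q^{k−1}), where s = Σ_{u ∈ ker f} w_H(u). -/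
/-!
Double count `A = ∑ u, ∑ v, d_H(p u, p v)` over all ordered pairs of messages, `N = q ^ k`.
Column by column, Cauchy–Schwarz on the symbol frequencies gives Plotkin's estimate
`q A ≤ r (q - 1) N²`. From below, for fixed `u` the separation condition applies to the
`N - |ker f|` messages outside the coset `u + ker f`; the distances from `u` sum to
`k (q - 1) q ^ (k - 1)` over the whole space and to `s` over that coset, so
`A ≥ N ((2t + 1)(N - |ker f|) - k (q - 1) q ^ (k - 1) + s)`. Comparing the two bounds with
`|ker f| = q ^ (k - l)` gives the theorem.
-/

open Finset

section Kernel
variable {G H 𝓕 : Type*} [AddGroup G] [AddGroup H] [Fintype G] [DecidableEq H] [FunLike 𝓕 G H]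
  [AddMonoidHomClass 𝓕 G H]

theorem card_filter_eq_zero_mul_card_of_surjective [Finite H] (f : 𝓕)
    (hf : Function.Surjective f) : #{x | f x = 0} * Nat.card H = Fintype.card G := by
  have hker : #{x | f x = 0} = Nat.card (f : G →+ H).ker := by
    rw [Nat.card_eq_fintype_card, ← Fintype.card_subtype]
    exact Fintype.card_congr (Equiv.subtypeEquivRight fun x => by simp)
  rw [hker, ← Nat.card_eq_fintype_card, ← (f : G →+ H).ker.card_mul_index,
    AddSubgroup.index_ker, AddMonoidHom.range_eq_top_of_surjective (f : G →+ H) hf,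
    AddSubgroup.card_top]

theorem sum_fiber_neg_add_eq_sum_ker {M : Type*} [AddCommMonoid M] (f : 𝓕) (u : G)
    (φ : G → M) : ∑ v with f v = f u, φ (-u + v) = ∑ w with f w = 0, φ w := by
  refine sum_nbij' (fun v => -u + v) (fun w => u + w) ?_ ?_ ?_ ?_ fun _ _ => rfl <;>
    intro x hx <;> simp_all

end Kernel

theorem card_mul_sum_hammingNorm {ι G : Type*} [Fintype ι] [DecidableEq ι] [AddGroup G]
    [Fintype G] [DecidableEq G] :
    Fintype.card G * ∑ w : ι → G, hammingNorm w
      = Fintype.card ι * (Fintype.card G - 1) * Fintype.card G ^ Fintype.card ι := by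
  have hcoord (i : ι) : Fintype.card G * #{w : ι → G | w i ≠ 0}
      = (Fintype.card G - 1) * Fintype.card G ^ Fintype.card ι := by
    have hzero := card_filter_eq_zero_mul_card_of_surjective (Pi.evalAddMonoidHom (fun _ => G) i)
      (Function.surjective_eval i)
    have hsplit := card_filter_add_card_filter_not (s := univ) fun w : ι → G => w i = 0
    simp only [Pi.evalAddMonoidHom_apply, Nat.card_eq_fintype_card, Fintype.card_fun] at hzero
    simp only [card_univ, Fintype.card_fun, ← ne_eq] at hsplit
    have hscaled := congrArg (Fintype.card G * ·) hsplit
    simp only [mul_add] at hscaled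
    rw [Nat.sub_mul, one_mul]
    exact Nat.eq_sub_of_add_eq (by linarith)
  simp only [hammingNorm, card_filter]
  rw [sum_comm, mul_sum]
  simp only [← card_filter, hcoord, sum_const, card_univ, smul_eq_mul, mul_assoc]

section Plotkin
variable {α β κ : Type*} [Fintype α] [Fintype β] [DecidableEq β] [Fintype κ]

theorem sq_card_le_card_mul_card_filter_eq (g : α → β) :
    Fintype.card α ^ 2 ≤ Fintype.card β * #{x : α × α | g x.1 = g x.2} := by
  have hfibers : #{x : α × α | g x.1 = g x.2} = ∑ b, #{a | g a = b} ^ 2 := by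
    rw [card_eq_sum_card_fiberwise (f := fun x => g x.1) (t := univ) fun _ _ => mem_univ _]
    refine sum_congr rfl fun b _ => ?_
    rw [sq, ← card_product]
    congr 1
    ext x
    simp only [mem_filter, mem_univ, true_and, mem_product]
    constructor
    · rintro ⟨h, rfl⟩
      exact ⟨rfl, h.symm⟩
    · rintro ⟨h1, h2⟩
      exact ⟨h1.trans h2.symm, h1⟩
  have hsum : ∑ b, #{a | g a = b} = Fintype.card α :=
    (card_eq_sum_card_fiberwise fun _ _ => mem_univ _).symm
  calc Fintype.card α ^ 2 = (∑ b, #{a | g a = b}) ^ 2 := by rw [hsum]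
    _ ≤ Fintype.card β * ∑ b, #{a | g a = b} ^ 2 := sq_sum_le_card_mul_sum_sq
    _ = _ := by rw [hfibers]

theorem card_mul_card_filter_ne_le (g : α → β) :
    Fintype.card β * #{x : α × α | g x.1 ≠ g x.2}
      ≤ (Fintype.card β - 1) * Fintype.card α ^ 2 := by
  have hsplit := card_filter_add_card_filter_not (s := univ) fun x : α × α => g x.1 = g x.2
  simp only [card_univ, Fintype.card_prod, ← sq, ← ne_eq] at hsplit
  have hscaled := congrArg (Fintype.card β * ·) hsplit
  simp only [mul_add] at hscaled
  have := sq_card_le_card_mul_card_filter_eq g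
  rw [Nat.sub_mul, one_mul]
  exact Nat.le_sub_of_add_le (by linarith)

theorem card_mul_sum_hammingDist_le (p : α → κ → β) :
    Fintype.card β * ∑ u, ∑ v, hammingDist (p u) (p v)
      ≤ Fintype.card κ * ((Fintype.card β - 1) * Fintype.card α ^ 2) := by
  have hcolumns :
      ∑ u, ∑ v, hammingDist (p u) (p v) = ∑ i, #{x : α × α | p x.1 i ≠ p x.2 i} := by
    simp only [hammingDist, card_filter]
    rw [← Fintype.sum_prod_type', sum_comm]
  rw [hcolumns, mul_sum]
  calc ∑ i, Fintype.card β * #{x : α × α | p x.1 i ≠ p x.2 i}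
      ≤ ∑ _i : κ, (Fintype.card β - 1) * Fintype.card α ^ 2 :=
        sum_le_sum fun i _ => card_mul_card_filter_ne_le fun a => p a i
    _ = _ := by rw [sum_const, card_univ, smul_eq_mul]

end Plotkin

section FunctionCorrecting
variable {ι G H 𝓕 κ β : Type*} [Fintype ι] [DecidableEq ι] [AddGroup G] [Fintype G]
  [DecidableEq G] [AddGroup H] [DecidableEq H] [FunLike 𝓕 (ι → G) H]
  [AddMonoidHomClass 𝓕 (ι → G) H] [Fintype κ] [DecidableEq β]

theorem sum_hammingDist_eq_sum_hammingNorm (u : ι → G) :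
    ∑ v, hammingDist u v = ∑ w : ι → G, hammingNorm w :=
  Fintype.sum_equiv (Equiv.addLeft (-u)) _ _ fun v => hammingDist_eq_hammingNorm u v

theorem sum_fiber_hammingDist_eq_sum_ker (f : 𝓕) (u : ι → G) :
    ∑ v with f v = f u, hammingDist u v = ∑ w with f w = 0, hammingNorm w := by
  simp only [hammingDist_eq_hammingNorm]
  exact sum_fiber_neg_add_eq_sum_ker f u hammingNorm

theorem le_sum_hammingDist_of_forall_ne (f : 𝓕) (p : (ι → G) → κ → β) (D : ℤ)
    (hp : ∀ u v, f u ≠ f v → D - hammingDist u v ≤ hammingDist (p u) (p v)) (u : ι → G) :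
    D * (Fintype.card (ι → G) - #{w | f w = 0}) - ∑ w : ι → G, (hammingNorm w : ℤ)
        + ∑ w with f w = 0, (hammingNorm w : ℤ)
      ≤ ∑ v, (hammingDist (p u) (p v) : ℤ) := by
  have hcard : (#{v | f v ≠ f u} : ℤ) = Fintype.card (ι → G) - #{w | f w = 0} := by
    have hfiber : #{v | f v = f u} = #{w | f w = 0} := by
      simpa only [card_eq_sum_ones] using sum_fiber_neg_add_eq_sum_ker f u fun _ => 1
    have hsplit := card_filter_add_card_filter_not (s := univ) fun v => f v = f u
    rw [hfiber, card_univ] at hsplit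
    simp only [ne_eq]
    omega
  have hdist : ∑ v with f v ≠ f u, (hammingDist u v : ℤ)
      = ∑ w : ι → G, (hammingNorm w : ℤ) - ∑ w with f w = 0, (hammingNorm w : ℤ) := by
    have hsplit := sum_filter_add_sum_filter_not univ (fun v => f v = f u)
      fun v => (hammingDist u v : ℤ)
    simp only [ne_eq, ← Nat.cast_sum, sum_fiber_hammingDist_eq_sum_ker,
      sum_hammingDist_eq_sum_hammingNorm] at hsplit ⊢
    omega
  calc D * (Fintype.card (ι → G) - #{w | f w = 0}) - ∑ w : ι → G, (hammingNorm w : ℤ)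
        + ∑ w with f w = 0, (hammingNorm w : ℤ)
      = ∑ v with f v ≠ f u, (D - hammingDist u v) := by
        rw [sum_sub_distrib, sum_const, nsmul_eq_mul, hdist, hcard]
        ring
    _ ≤ ∑ v with f v ≠ f u, (hammingDist (p u) (p v) : ℤ) :=
        sum_le_sum fun v hv => hp u v fun h => (mem_filter.mp hv).2 h.symm
    _ ≤ ∑ v, (hammingDist (p u) (p v) : ℤ) :=
        sum_le_sum_of_subset_of_nonneg (filter_subset _ _) fun _ _ _ => Nat.cast_nonneg _

theorem plotkin_bound_of_forall_ne [Fintype β] [Nonempty β] (f : 𝓕) (p : (ι → G) → κ → β)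
    (D : ℤ) (hp : ∀ u v, f u ≠ f v → D - hammingDist u v ≤ hammingDist (p u) (p v)) :
    Fintype.card β * (D * (Fintype.card (ι → G) - #{w | f w = 0})
        - ∑ w : ι → G, (hammingNorm w : ℤ) + ∑ w with f w = 0, (hammingNorm w : ℤ))
      ≤ Fintype.card κ * (Fintype.card β - 1) * Fintype.card (ι → G) := by
  have hlower := sum_le_sum fun u (_ : u ∈ univ) => le_sum_hammingDist_of_forall_ne f p D hp u
  rw [sum_const, card_univ, nsmul_eq_mul] at hlower
  have hupper : (Fintype.card β * ∑ u, ∑ v, (hammingDist (p u) (p v) : ℤ))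
      ≤ Fintype.card κ * (Fintype.card β - 1) * Fintype.card (ι → G) ^ 2 := by
    have := Nat.cast_le (α := ℤ).mpr (card_mul_sum_hammingDist_le p)
    push_cast [Nat.cast_sub Fintype.card_pos] at this
    linarith
  have hN : (0 : ℤ) < Fintype.card (ι → G) := by exact_mod_cast Fintype.card_pos
  refine le_of_mul_le_mul_left ?_ hN
  have := mul_le_mul_of_nonneg_left hlower (Nat.cast_nonneg (α := ℤ) (Fintype.card β))
  linarith

end FunctionCorrecting

theorem plotkin_bound_linear_FCC_hamming_general (F : Type*) [Field F] [Fintype F] [DecidableEq F]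
    (q k l r t : ℕ) (hq : Fintype.card F = q)
    (f : (Fin k → F) →ₗ[F] (Fin l → F)) (hf : Function.Surjective f)
    (p : (Fin k → F) → (Fin r → F))
    (hp : ∀ u v : Fin k → F, f u ≠ f v →
      (hammingDist (p u) (p v) : ℤ) ≥ max (2 * (t : ℤ) + 1 - hammingDist u v) 0) :
    (r : ℝ) ≥ ((q : ℝ) / ((q : ℝ) - 1)) * (2 * (t : ℝ) + 1) * (1 - ((q : ℝ) ^ l)⁻¹) - k +
      (∑ u ∈ Finset.univ.filter (fun u : Fin k → F => f u = 0), (hammingNorm u : ℝ)) /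
        (((q : ℝ) - 1) * (q : ℝ) ^ (k - 1)) := by
  have hbound := plotkin_bound_of_forall_ne f p (2 * t + 1)
    fun u v huv => (le_max_left _ _).trans (hp u v huv)
  have hker := card_filter_eq_zero_mul_card_of_surjective f hf
  have hnorm := card_mul_sum_hammingNorm (ι := Fin k) (G := F)
  simp only [Fintype.card_fun, Fintype.card_fin, Nat.card_eq_fintype_card, hq] at hbound hker hnorm
  have hq1 : 1 < q := hq ▸ Fintype.one_lt_card
  have hK : (#{w | f w = 0} : ℝ) = q ^ k / q ^ l := by
    rw [eq_div_iff (by positivity)]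
    exact_mod_cast hker
  have hS : ∑ w : Fin k → F, (hammingNorm w : ℝ) = k * (q - 1) * q ^ k / q := by
    have := congrArg (Nat.cast : ℕ → ℝ) hnorm
    push_cast [Nat.cast_sub hq1.le] at this
    rw [eq_div_iff (by positivity), mul_comm, this]
  have hbound' := (Int.cast_le (R := ℝ)).mpr hbound
  push_cast [hK, hS] at hbound'
  set D : ℝ := 2 * t + 1
  set s : ℝ := ∑ w with f w = 0, (hammingNorm w : ℝ)
  -- `k - 1` truncates at `k = 0`, where the kernel weight `s` vanishes anyway.
  have hs : s / ((q - 1) * q ^ (k - 1)) = q * s / ((q - 1) * q ^ k) := by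
    rcases k with _ | k
    · simp [s, hammingNorm]
    · rw [Nat.add_sub_cancel, pow_succ]
      field_simp
  have hq_sub_one : (0 : ℝ) < q - 1 := by simp [hq1]
  have hrhs : q / (q - 1) * D * (1 - ((q : ℝ) ^ l)⁻¹) - k + q * s / ((q - 1) * q ^ k)
      = q * (D * (q ^ k - q ^ k / q ^ l) - k * (q - 1) * q ^ k / q + s) / ((q - 1) * q ^ k) := by
    field_simp
  rw [ge_iff_le, hs, hrhs, div_le_iff₀ (by positivity)]
  linarith

theorem plotkin_bound_linear_FCC_hamming (F : Type*) [Field F] [Fintype F] [DecidableEq F]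
    (q k l r t : ℕ) (hq : Fintype.card F = q) (hk : 1 ≤ k) (ht : 1 ≤ t)
    (f : (Fin k → F) →ₗ[F] (Fin l → F)) (hf : Function.Surjective f)
    (p : (Fin k → F) → (Fin r → F))
    (hp : ∀ u v : Fin k → F, f u ≠ f v →
      (hammingDist (p u) (p v) : ℤ) ≥ max (2 * (t : ℤ) + 1 - hammingDist u v) 0) :
    (r : ℝ) ≥ ((q : ℝ) / ((q : ℝ) - 1)) * (2 * (t : ℝ) + 1) * (1 - ((q : ℝ) ^ l)⁻¹) - k +
      (∑ u ∈ Finset.univ.filter (fun u : Fin k → F => f u = 0), (hammingNorm u : ℝ)) /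
        (((q : ℝ) - 1) * (q : ℝ) ^ (k - 1)) :=
  plotkin_bound_linear_FCC_hamming_general F q k l r t hq f hf p hp
end
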